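/- Let (X,G,Φ) and (X',G',Ψ) be Cantor actions with G finitely generated, and let h : X → X' be a continuous orbit equivalence between them. If there exist y' ∈ X' and an adapted neighborhood basis {V_ℓ} for Ψ at y' whose stabilizer chain K'_ℓ := {f ∈ G(Ψ) : f(w) = w for all w ∈ V_ℓ} is eventually constant (i.e., Ψ is stable), then for every x ∈ X and every adapted neighborhood basis {U_ℓ} for Φ at x, the stabilizer chain K_ℓ := {f ∈ G(Φ) : f(z) = z for all z ∈ U_ℓ} is eventually constant (i.e., Φ is stable). -/

import Mathlib

open Set Topology Filter

section CantorActionDefs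

variable {X : Type*} [MetricSpace X] {G : Type*} [Group G]

/-- `Φ : G → Homeo(X)` is a group homomorphism, i.e. an action of `G` on `X` by
homeomorphisms. -/
def IsActionHom (Φ : G → X ≃ₜ X) : Prop :=
  (∀ x : X, Φ 1 x = x) ∧ ∀ g h : G, ∀ x : X, Φ (g * h) x = Φ g (Φ h x)

/-- The action is minimal: every orbit is dense. -/
def IsMinimalAction (Φ : G → X ≃ₜ X) : Prop :=
  ∀ x : X, Dense (Set.range fun g : G => Φ g x)

/-- The family `{Φ g : g ∈ G}` is equicontinuous with respect to the metric on `X`. -/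
def IsEquicontinuousAction (Φ : G → X ≃ₜ X) : Prop :=
  ∀ ε : ℝ, 0 < ε → ∃ δ : ℝ, 0 < δ ∧
    ∀ g : G, ∀ x y : X, dist x y < δ → dist (Φ g x) (Φ g y) < ε

/-- A Cantor action: a minimal equicontinuous action by homeomorphisms. -/
def IsCantorAction (Φ : G → X ≃ₜ X) : Prop :=
  IsActionHom Φ ∧ IsMinimalAction Φ ∧ IsEquicontinuousAction Φ

/-- A clopen subset adapted to the action: nonempty, clopen, and any translate meeting it
equals it. -/
def IsAdapted (Φ : G → X ≃ₜ X) (U : Set X) : Prop :=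
  U.Nonempty ∧ IsClopen U ∧ ∀ g : G, (Φ g '' U ∩ U).Nonempty → Φ g '' U = U

/-- The Ellis (closure) group `G(Φ)`: the closure of `{Φ g : g ∈ G}` in `C(X,X)` with the
compact-open topology. -/
def actionClosure (Φ : G → X ≃ₜ X) : Set C(X, X) :=
  closure (Set.range fun g : G => (Φ g : C(X, X)))

/-- An adapted neighborhood basis at `x`: a properly descending chain of adapted clopen
sets starting at `X`, containing `x`, with intersection `{x}`. -/
def IsAdaptedBasis (Φ : G → X ≃ₜ X) (x : X) (U : ℕ → Set X) : Prop :=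
  U 0 = Set.univ ∧ (∀ ℓ : ℕ, IsAdapted Φ (U ℓ)) ∧ (∀ ℓ : ℕ, x ∈ U ℓ) ∧
    (∀ ℓ : ℕ, U (ℓ + 1) ⊂ U ℓ) ∧ (⋂ ℓ : ℕ, U ℓ) = ({x} : Set X)

/-- The stabilizer chain `K_ℓ`: elements of the Ellis group fixing `U ℓ` pointwise. -/
def stabChain (Φ : G → X ≃ₜ X) (U : ℕ → Set X) (ℓ : ℕ) : Set C(X, X) :=
  {f ∈ actionClosure Φ | ∀ z ∈ U ℓ, f z = z}

/-- The stabilizer chain is eventually constant (the action is stable along `U`). -/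
def IsStableChain (Φ : G → X ≃ₜ X) (U : ℕ → Set X) : Prop :=
  ∃ ℓ₀ : ℕ, ∀ ℓ : ℕ, ℓ₀ ≤ ℓ → stabChain Φ U ℓ = stabChain Φ U ℓ₀

/-- The action of the Ellis group is locally completely quasi-analytic. -/
def IsLCQA (Φ : G → X ≃ₜ X) : Prop :=
  ∃ ε : ℝ, 0 < ε ∧ ∀ U : Set X, IsAdapted Φ U → Metric.diam U < ε →
    ∀ V : Set X, IsAdapted Φ V → V ⊆ U →
      ∀ f₁ ∈ actionClosure Φ, ∀ f₂ ∈ actionClosure Φ,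
        (∀ z ∈ V, f₁ z = f₂ z) → ∀ z ∈ U, f₁ z = f₂ z

/-- `f` is a non-Hausdorff element of the Ellis group at `x`. -/
def IsNonHausdorffElem (Φ : G → X ≃ₜ X) (f : C(X, X)) (x : X) : Prop :=
  f ∈ actionClosure Φ ∧ f x = x ∧
    (∀ W : Set X, IsClopen W → x ∈ W → ¬ ∀ z ∈ W, f z = z) ∧
    ∃ (xs : ℕ → X) (W : ℕ → Set X), Filter.Tendsto xs Filter.atTop (nhds x) ∧
      ∀ i : ℕ, xs i ∈ W i ∧ IsClopen (W i) ∧ ⇑f '' W i = W i ∧ ∀ z ∈ W i, f z = z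

/-- The restrictions to an invariant set `U` of the maps `Φ g` with `Φ g (U) = U`,
as elements of `C(U,U)`. -/
def restrictedMaps (Φ : G → X ≃ₜ X) (U : Set X) : Set C(U, U) :=
  {u : C(U, U) | ∃ g : G, Φ g '' U = U ∧ ∀ z : U, (u z : X) = Φ g (z : X)}

/-- The stabilizer subgroup `G_U = {g : G | Φ g (U) = U}` of a set `U`. -/
def setStabilizer (Φ : G → X ≃ₜ X) (hΦ : IsActionHom Φ) (U : Set X) : Subgroup G where
  carrier := {g : G | Φ g '' U = U}
  one_mem' := by
    show ⇑(Φ 1) '' U = U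
    have h : ⇑(Φ 1) = id := funext hΦ.1
    rw [h, Set.image_id]
  mul_mem' := by
    intro a b ha hb
    show ⇑(Φ (a * b)) '' U = U
    have h : ⇑(Φ (a * b)) = ⇑(Φ a) ∘ ⇑(Φ b) := funext fun z => hΦ.2 a b z
    rw [h, Set.image_comp]
    rw [show ⇑(Φ b) '' U = U from hb, show ⇑(Φ a) '' U = U from ha]
  inv_mem' := by
    intro a ha
    show ⇑(Φ a⁻¹) '' U = U
    have hcomp : ⇑(Φ a⁻¹) ∘ ⇑(Φ a) = id := funext fun z => by
      show Φ a⁻¹ (Φ a z) = z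
      have h2 := hΦ.2 a⁻¹ a z
      rw [inv_mul_cancel] at h2
      rw [← h2]
      exact hΦ.1 z
    calc ⇑(Φ a⁻¹) '' U = ⇑(Φ a⁻¹) '' (⇑(Φ a) '' U) := by
            rw [show ⇑(Φ a) '' U = U from ha]
      _ = (⇑(Φ a⁻¹) ∘ ⇑(Φ a)) '' U := (Set.image_comp _ _ _).symm
      _ = U := by rw [hcomp, Set.image_id]

end CantorActionDefs

section ChainDefs

variable {G : Type*} [Group G]

/-- A group chain in `G`: descending subgroups starting at `G`, each of finite index in
the previous one. -/
def IsGroupChain (K : ℕ → Subgroup G) : Prop :=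
  K 0 = ⊤ ∧ ∀ ℓ : ℕ, K (ℓ + 1) ≤ K ℓ ∧ (K (ℓ + 1)).relIndex (K ℓ) ≠ 0

/-- The inverse limit `lim← G ⧸ C ℓ` of the coset spaces along a chain, as a subset of
the product. -/
def chainLimitSet (C : ℕ → Subgroup G) : Set (∀ ℓ : ℕ, G ⧸ C ℓ) :=
  {σ | ∀ ℓ : ℕ, ∃ g : G, σ ℓ = (g : G ⧸ C ℓ) ∧ σ (ℓ + 1) = (g : G ⧸ C (ℓ + 1))}

/-- The inverse limit topology on `lim← G ⧸ C ℓ`: the subspace topology from the product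
of the discrete coset spaces. -/
def chainLimitTop (C : ℕ → Subgroup G) : TopologicalSpace (chainLimitSet C) :=
  TopologicalSpace.induced Subtype.val
    (@Pi.topologicalSpace ℕ (fun ℓ => G ⧸ C ℓ) fun _ => ⊥)

/-- The basepoint `(e C_ℓ)_ℓ` of the inverse limit. -/
def chainBasepoint (C : ℕ → Subgroup G) : chainLimitSet C :=
  ⟨fun ℓ => ((1 : G) : G ⧸ C ℓ), fun _ => ⟨1, rfl, rfl⟩⟩

theorem smul_mem_chainLimitSet {C : ℕ → Subgroup G} (g : G) {σ : ∀ ℓ : ℕ, G ⧸ C ℓ}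
    (hσ : σ ∈ chainLimitSet C) : (fun ℓ => g • σ ℓ) ∈ chainLimitSet C := by
  intro ℓ
  obtain ⟨k, h1, h2⟩ := hσ ℓ
  refine ⟨g * k, ?_, ?_⟩
  · show g • σ ℓ = _
    rw [h1]; rfl
  · show g • σ (ℓ + 1) = _
    rw [h2]; rfl

/-- The conjugate subgroup `g H g⁻¹`. -/
def conjSubgroup (g : G) (H : Subgroup G) : Subgroup G :=
  H.map (MulAut.conj g).toMonoidHom

/-- Equivalence of group chains (interlacing). -/
def ChainsEquivalent (Gc Hc : ℕ → Subgroup G) : Prop :=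
  ∃ K : ℕ → Subgroup G, IsGroupChain K ∧
    ∃ ls js : ℕ → ℕ, StrictMono ls ∧ StrictMono js ∧
      ∀ k : ℕ, K (2 * k) = Gc (ls k) ∧ K (2 * k + 1) = Hc (js k)

/-- Conjugate equivalence of group chains. -/
def ChainsConjugateEquivalent (Gc Hc : ℕ → Subgroup G) : Prop :=
  ∃ gs : ℕ → G, (∀ ℓ : ℕ, (gs ℓ)⁻¹ * gs (ℓ + 1) ∈ Gc ℓ) ∧
    ChainsEquivalent (fun ℓ => conjSubgroup (gs ℓ) (Gc ℓ)) Hc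

end ChainDefs

section TwoSpaces

variable {X : Type*} [MetricSpace X] {X' : Type*} [MetricSpace X']
variable {G : Type*} {G' : Type*}

/-- A continuous orbit equivalence between two actions, implemented by a homeomorphism
`h : X → X'` with locally constant orbit transfer functions. -/
def IsContinuousOrbitEquivalence (Φ : G → X ≃ₜ X) (Ψ : G' → X' ≃ₜ X') (h : X ≃ₜ X') :
    Prop :=
  (∀ (x : X) (g : G), ∃ (k : G') (O : Set X), IsOpen O ∧ x ∈ O ∧
      ∀ z ∈ O, Ψ k (h z) = h (Φ g z)) ∧
    ∀ (y : X') (k : G'), ∃ (g : G) (O : Set X'), IsOpen O ∧ y ∈ O ∧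
      ∀ w ∈ O, Φ g (h.symm w) = h.symm (Ψ k w)

end TwoSpaces

/-! The action of the Ellis group is quasi-analytic at a point `x` when every element that is the
identity near `x` is the identity on a fixed neighbourhood of `x`; for an adapted basis at `x`
this is exactly what makes the stabilizer chain eventually constant. Stability at `y'` gives
quasi-analyticity at `y'`, and conjugating by group elements that carry a point `y` close to `y'`
(minimality and equicontinuity) moves it to every `y`. Finally, since `G` is finitely generated
and `X` is compact, the orbit equivalence `h` intertwines each `Φ g` with a single `Ψ k` on balls
of one fixed radius; passing to limits in the compact Ellis group `G(Ψ)`, every `f ∈ G(Φ)` is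
intertwined near `x` with some `ψ ∈ G(Ψ)`, which transports quasi-analyticity from `h x` to `x`. -/

open Metric

section SingleAction

variable {X : Type*} [MetricSpace X] {G : Type*} {Φ : G → X ≃ₜ X}

theorem IsActionHom.inv_apply_apply [Group G] (hΦ : IsActionHom Φ) (g : G) (z : X) :
    Φ g⁻¹ (Φ g z) = z := by
  rw [← hΦ.2, inv_mul_cancel, hΦ.1]

theorem IsActionHom.apply_inv_apply [Group G] (hΦ : IsActionHom Φ) (g : G) (z : X) :
    Φ g (Φ g⁻¹ z) = z := by
  rw [← hΦ.2, mul_inv_cancel, hΦ.1]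

theorem IsActionHom.conj_mem_actionClosure [Group G] (hΦ : IsActionHom Φ) (g : G)
    {f : C(X, X)} (hf : f ∈ actionClosure Φ) :
    (Φ g : C(X, X)).comp (f.comp (Φ g⁻¹)) ∈ actionClosure Φ := by
  refine map_mem_closure
    (f := fun f : C(X, X) => (Φ g : C(X, X)).comp (f.comp (Φ g⁻¹ : C(X, X))))
    ((ContinuousMap.continuous_postcomp _).comp (ContinuousMap.continuous_precomp _)) hf ?_
  rintro _ ⟨k, rfl⟩
  exact ⟨g * k * g⁻¹, ContinuousMap.ext fun z => by simp [hΦ.2]⟩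

theorem IsEquicontinuousAction.isCompact_actionClosure [CompactSpace X]
    (hΦ : IsEquicontinuousAction Φ) : IsCompact (actionClosure Φ) := by
  let e := (ContinuousMap.isometryEquivBoundedOfCompact X X).toHomeomorph
  have hA : IsCompact (closure (e '' range fun g => (Φ g : C(X, X)))) := by
    refine BoundedContinuousFunction.arzela_ascoli univ isCompact_univ _
      (fun _ _ _ => mem_univ _) ?_
    refine (Metric.uniformEquicontinuous_iff.2 fun ε hε => ?_).equicontinuous
    obtain ⟨δ, hδ, hΦδ⟩ := hΦ ε hε
    refine ⟨δ, hδ, fun y z hyz => ?_⟩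
    rintro ⟨_, ⟨_, ⟨g, rfl⟩, rfl⟩⟩
    exact hΦδ g y z hyz
  rwa [← e.image_closure, e.isCompact_image] at hA

theorem IsCantorAction.exists_apply_mem_and_eventually_inv_apply_mem [Group G]
    (hΦ : IsCantorAction Φ) {y y' : X} {N V : Set X} (hN : N ∈ 𝓝 y) (hV : V ∈ 𝓝 y') :
    ∃ g : G, Φ g y ∈ V ∧ ∀ᶠ w in 𝓝 y', Φ g⁻¹ w ∈ N := by
  obtain ⟨ε, hε, hεN⟩ := Metric.mem_nhds_iff.1 hN
  obtain ⟨δ, hδ, hΦδ⟩ := hΦ.2.2 ε hε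
  obtain ⟨_, ⟨hgV, hgy⟩, g, rfl⟩ := mem_closure_iff_nhds.1 (hΦ.2.1 y y') _
    (inter_mem hV (ball_mem_nhds y' (half_pos hδ)))
  refine ⟨g, hgV, mem_of_superset (ball_mem_nhds y' (half_pos hδ)) fun w hw => hεN ?_⟩
  have hwg : dist w (Φ g y) < δ := by
    have := dist_triangle w y' (Φ g y)
    rw [mem_ball] at hw hgy
    rw [dist_comm] at hgy
    linarith
  have := hΦδ g⁻¹ w (Φ g y) hwg
  rwa [hΦ.1.inv_apply_apply] at this

/-- A pointed form of the local quasi-analyticity of the action of `G(Φ)`. -/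
def IsQuasiAnalyticAt (Φ : G → X ≃ₜ X) (x : X) (W : Set X) : Prop :=
  ∀ f ∈ actionClosure Φ, (∀ᶠ z in 𝓝 x, f z = z) → ∀ z ∈ W, f z = z

/-- The translates of the adapted set `V` partition the space, so the set `W` obtained by
conjugation does not depend on the conjugating element. -/
theorem IsQuasiAnalyticAt.exists_mem_nhds [Group G] (hΦ : IsCantorAction Φ) {y' : X}
    {V : Set X} (hV : IsAdapted Φ V) (hy' : y' ∈ V) (hqa : IsQuasiAnalyticAt Φ y' V) (y : X) :
    ∃ W ∈ 𝓝 y, IsQuasiAnalyticAt Φ y W := by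
  have hVn : V ∈ 𝓝 y' := hV.2.1.isOpen.mem_nhds hy'
  obtain ⟨g₀, hg₀, -⟩ := hΦ.exists_apply_mem_and_eventually_inv_apply_mem univ_mem hVn
  refine ⟨Φ g₀ ⁻¹' V, (Φ g₀).continuous.continuousAt.preimage_mem_nhds
    (hV.2.1.isOpen.mem_nhds hg₀), fun f hf hfix z hz => ?_⟩
  obtain ⟨g, hg, hinv⟩ := hΦ.exists_apply_mem_and_eventually_inv_apply_mem hfix hVn
  have hconj := hqa _ (hΦ.1.conj_mem_actionClosure g hf) <| hinv.mono fun w hw => by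
    have hw : f (Φ g⁻¹ w) = Φ g⁻¹ w := hw
    simp only [ContinuousMap.comp_apply, ContinuousMap.coe_coe]
    rw [hw, hΦ.1.apply_inv_apply]
  have hmul : ∀ w, Φ (g * g₀⁻¹) (Φ g₀ w) = Φ g w := fun w => by
    rw [hΦ.1.2, hΦ.1.inv_apply_apply]
  have hgV : Φ (g * g₀⁻¹) '' V = V := hV.2.2 _ ⟨Φ g y, ⟨Φ g₀ y, hg₀, hmul y⟩, hg⟩
  have hz' : Φ g z ∈ V := hgV ▸ ⟨Φ g₀ z, hz, hmul z⟩
  have := hconj _ hz'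
  simp only [ContinuousMap.comp_apply, ContinuousMap.coe_coe, hΦ.1.inv_apply_apply] at this
  exact (Φ g).injective this

variable {x : X} {U : ℕ → Set X}

theorem IsAdaptedBasis.antitone (hU : IsAdaptedBasis Φ x U) : Antitone U :=
  antitone_nat_of_succ_le fun ℓ => (hU.2.2.2.1 ℓ).subset

theorem IsAdaptedBasis.mem_nhds (hU : IsAdaptedBasis Φ x U) (ℓ : ℕ) : U ℓ ∈ 𝓝 x :=
  (hU.2.1 ℓ).2.1.isOpen.mem_nhds (hU.2.2.1 ℓ)

theorem IsAdaptedBasis.exists_subset [CompactSpace X] (hU : IsAdaptedBasis Φ x U) {N : Set X}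
    (hN : N ∈ 𝓝 x) : ∃ ℓ, U ℓ ⊆ N :=
  exists_subset_nhds_of_isCompact hU.antitone.directed_ge
    (fun ℓ => (hU.2.1 ℓ).2.1.isClosed.isCompact) (by rw [hU.2.2.2.2]; rintro z rfl; exact hN)

theorem IsAdaptedBasis.isQuasiAnalyticAt [CompactSpace X] (hU : IsAdaptedBasis Φ x U) {ℓ₀ : ℕ}
    (hℓ₀ : ∀ ℓ, ℓ₀ ≤ ℓ → stabChain Φ U ℓ = stabChain Φ U ℓ₀) :
    IsQuasiAnalyticAt Φ x (U ℓ₀) := by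
  intro f hf hfix
  obtain ⟨ℓ, hℓ⟩ := hU.exists_subset hfix
  have hmem : f ∈ stabChain Φ U (max ℓ ℓ₀) :=
    ⟨hf, fun z hz => hℓ (hU.antitone (le_max_left _ _) hz)⟩
  rw [hℓ₀ _ (le_max_right _ _)] at hmem
  exact hmem.2

theorem IsAdaptedBasis.isStableChain [CompactSpace X] (hU : IsAdaptedBasis Φ x U) {W : Set X}
    (hW : W ∈ 𝓝 x) (hqa : IsQuasiAnalyticAt Φ x W) : IsStableChain Φ U := by
  obtain ⟨ℓ₀, hℓ₀⟩ := hU.exists_subset hW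
  refine ⟨ℓ₀, fun ℓ hℓ => Subset.antisymm ?_ ?_⟩
  · rintro f ⟨hf, hfix⟩
    exact ⟨hf, fun z hz => hqa f hf (mem_of_superset (hU.mem_nhds ℓ) hfix) z (hℓ₀ hz)⟩
  · rintro f ⟨hf, hfix⟩
    exact ⟨hf, fun z hz => hfix z (hU.antitone hℓ hz)⟩

end SingleAction

section OrbitEquivalence

variable {X : Type*} [MetricSpace X] {X' : Type*} [MetricSpace X']
variable {G : Type*} {G' : Type*}
variable {Φ : G → X ≃ₜ X} {Ψ : G' → X' ≃ₜ X'} {h : X ≃ₜ X'}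

/-- The cocycle `α(g, ·)` of `h` can be taken constant on every ball of radius `δ`. -/
def HasCocycleOnBalls (Φ : G → X ≃ₜ X) (Ψ : G' → X' ≃ₜ X') (h : X ≃ₜ X') (δ : ℝ) (g : G) :
    Prop :=
  ∀ x₀ : X, ∃ k : G', ∀ z ∈ ball x₀ δ, Ψ k (h z) = h (Φ g z)

theorem HasCocycleOnBalls.mono {δ δ' : ℝ} {g : G} (hg : HasCocycleOnBalls Φ Ψ h δ g)
    (hδ : δ' ≤ δ) : HasCocycleOnBalls Φ Ψ h δ' g :=
  fun x₀ => (hg x₀).imp fun _ hk z hz => hk z (ball_subset_ball hδ hz)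

theorem hasCocycleOnBalls_one [Group G] [Group G'] (hΦ : IsActionHom Φ) (hΨ : IsActionHom Ψ)
    (δ : ℝ) : HasCocycleOnBalls Φ Ψ h δ 1 :=
  fun _ => ⟨1, fun z _ => by rw [hΦ.1, hΨ.1]⟩

theorem HasCocycleOnBalls.mul [Group G] [Group G'] (hΦ : IsActionHom Φ) (hΨ : IsActionHom Ψ)
    {δ₁ δ₂ : ℝ} {s g : G}
    (hs : HasCocycleOnBalls Φ Ψ h δ₁ s) (hg : HasCocycleOnBalls Φ Ψ h δ₂ g)
    (hmaps : ∀ x₀, MapsTo (Φ g) (ball x₀ δ₂) (ball (Φ g x₀) δ₁)) :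
    HasCocycleOnBalls Φ Ψ h δ₂ (s * g) := by
  intro x₀
  obtain ⟨k, hk⟩ := hg x₀
  obtain ⟨k', hk'⟩ := hs (Φ g x₀)
  exact ⟨k' * k, fun z hz => by rw [hΨ.2, hk z hz, hk' _ (hmaps x₀ hz), hΦ.2]⟩

theorem IsContinuousOrbitEquivalence.eventually_hasCocycleOnBalls [CompactSpace X]
    (hcoe : IsContinuousOrbitEquivalence Φ Ψ h) (g : G) :
    ∀ᶠ δ in 𝓝[>] 0, HasCocycleOnBalls Φ Ψ h δ g := by
  choose k O hO hxO hk using fun x => hcoe.1 x g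
  obtain ⟨δ, hδ, hball⟩ :=
    lebesgue_number_lemma_of_metric isCompact_univ hO fun x _ => mem_iUnion.2 ⟨x, hxO x⟩
  have hg : HasCocycleOnBalls Φ Ψ h δ g := fun x₀ => by
    obtain ⟨x, hx⟩ := hball x₀ (mem_univ _)
    exact ⟨k x, fun z hz => hk x z (hx hz)⟩
  exact mem_of_superset (Ioo_mem_nhdsGT hδ) fun _ hδ' => hg.mono hδ'.2.le

/-- It suffices to find the radius for the generators: equicontinuity keeps the image of a small
ball inside a ball of that radius. -/
theorem IsContinuousOrbitEquivalence.exists_pos_forall_hasCocycleOnBalls [CompactSpace X]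
    [Group G] [Group.FG G] [Group G'] (hcoe : IsContinuousOrbitEquivalence Φ Ψ h)
    (hΦ : IsCantorAction Φ) (hΨ : IsActionHom Ψ) : ∃ δ > 0, ∀ g, HasCocycleOnBalls Φ Ψ h δ g := by
  obtain ⟨S, hS, hSfin⟩ := Group.fg_iff.1 ‹Group.FG G›
  obtain ⟨δ₀, hδ₀, hS₀⟩ : ∃ δ₀ > 0, ∀ s ∈ S,
      HasCocycleOnBalls Φ Ψ h δ₀ s ∧ HasCocycleOnBalls Φ Ψ h δ₀ s⁻¹ :=
    (eventually_mem_nhdsWithin.and ((hSfin.eventually_all).2 fun s _ =>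
      (hcoe.eventually_hasCocycleOnBalls s).and (hcoe.eventually_hasCocycleOnBalls s⁻¹))).exists
  obtain ⟨δ, hδ, hΦδ⟩ := hΦ.2.2 δ₀ hδ₀
  have hmaps : ∀ g x₀, MapsTo (Φ g) (ball x₀ δ) (ball (Φ g x₀) δ₀) :=
    fun g x₀ z hz => hΦδ g z x₀ hz
  refine ⟨δ, hδ, fun g => ?_⟩
  induction (hS ▸ Subgroup.mem_top g : g ∈ Subgroup.closure S) using
    Subgroup.closure_induction_left with
  | one => exact hasCocycleOnBalls_one hΦ.1 hΨ δ
  | mul_left s hs g _ ih => exact (hS₀ s hs).1.mul hΦ.1 hΨ ih (hmaps g)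
  | inv_mul_cancel s hs g _ ih => exact (hS₀ s hs).2.mul hΦ.1 hΨ ih (hmaps g)

/-- The intertwined pairs `(f, ψ)` form a closed set, whose projection along the compact factor
`G(Ψ)` is closed and contains every `Φ g`. -/
theorem exists_mem_actionClosure_comp_eqOn (hK : IsCompact (actionClosure Ψ)) {O : Set X}
    (hO : ∀ g, ∃ k, ∀ z ∈ O, Ψ k (h z) = h (Φ g z)) {f : C(X, X)}
    (hf : f ∈ actionClosure Φ) : ∃ ψ ∈ actionClosure Ψ, ∀ z ∈ O, ψ (h z) = h (f z) := by
  have := isCompact_iff_compactSpace.1 hK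
  let P : Set (C(X, X) × actionClosure Ψ) :=
    {p | ∀ z ∈ O, (p.2 : C(X', X')) (h z) = h (p.1 z)}
  have hP : IsClosed P := by
    simp only [P, ofPred_forall]
    exact isClosed_biInter fun z _ => isClosed_eq (by fun_prop) (by fun_prop)
  have hsub : actionClosure Φ ⊆ Prod.fst '' P := by
    refine closure_minimal ?_ (isClosedMap_fst_of_compactSpace P hP)
    rintro _ ⟨g, rfl⟩
    obtain ⟨k, hk⟩ := hO g
    exact ⟨(Φ g, ⟨Ψ k, subset_closure ⟨k, rfl⟩⟩), hk, rfl⟩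
  obtain ⟨⟨_, ψ, hψ⟩, hψP, rfl⟩ := hsub hf
  exact ⟨ψ, hψ, hψP⟩

theorem IsQuasiAnalyticAt.of_comp_eqOn (hK : IsCompact (actionClosure Ψ)) {x : X} {O : Set X}
    (hOx : O ∈ 𝓝 x) (hO : ∀ g, ∃ k, ∀ z ∈ O, Ψ k (h z) = h (Φ g z)) {W' : Set X'}
    (hqa : IsQuasiAnalyticAt Ψ (h x) W') : IsQuasiAnalyticAt Φ x (O ∩ h ⁻¹' W') := by
  intro f hf hfix z hz
  obtain ⟨ψ, hψ, hψf⟩ := exists_mem_actionClosure_comp_eqOn hK hO hf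
  have hψfix : ∀ᶠ w in 𝓝 (h x), ψ w = w := by
    rw [← h.map_nhds_eq, eventually_map]
    filter_upwards [hfix, hOx] with z hfz hz
    rw [hψf z hz, hfz]
  exact h.injective ((hψf z hz.1).symm.trans (hqa ψ hψ hψfix _ hz.2))

end OrbitEquivalence

theorem stmt13_general {X : Type*} [MetricSpace X] [CompactSpace X]
    {X' : Type*} [MetricSpace X'] [CompactSpace X']
    {G : Type*} [Group G] [Group.FG G]
    {G' : Type*} [Group G']
    (Φ : G → X ≃ₜ X) (hΦ : IsCantorAction Φ)
    (Ψ : G' → X' ≃ₜ X') (hΨ : IsCantorAction Ψ)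
    (h : X ≃ₜ X') (hcoe : IsContinuousOrbitEquivalence Φ Ψ h)
    (hstable : ∃ (y' : X') (V : ℕ → Set X'), IsAdaptedBasis Ψ y' V ∧ IsStableChain Ψ V) :
    ∀ (x : X) (U : ℕ → Set X), IsAdaptedBasis Φ x U → IsStableChain Φ U := by
  intro x U hU
  obtain ⟨y', V, hV, ℓ₀, hℓ₀⟩ := hstable
  obtain ⟨W', hW', hqa'⟩ :=
    (hV.isQuasiAnalyticAt hℓ₀).exists_mem_nhds hΨ (hV.2.1 ℓ₀) (hV.2.2.1 ℓ₀) (h x)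
  obtain ⟨δ, hδ, hcocycle⟩ := hcoe.exists_pos_forall_hasCocycleOnBalls hΦ hΨ.1
  have hqa := hqa'.of_comp_eqOn hΨ.2.2.isCompact_actionClosure (ball_mem_nhds x hδ)
    fun g => hcocycle g x
  exact hU.isStableChain
    (inter_mem (ball_mem_nhds x hδ) (h.continuous.continuousAt.preimage_mem_nhds hW')) hqa

/-- Stability is an invariant of continuous orbit equivalence (for
finitely generated acting group). -/
theorem stmt13 {X : Type*} [MetricSpace X] [CompactSpace X] [TotallyDisconnectedSpace X]
    [Nonempty X] (hX : Perfect (Set.univ : Set X))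
    {X' : Type*} [MetricSpace X'] [CompactSpace X'] [TotallyDisconnectedSpace X']
    [Nonempty X'] (hX' : Perfect (Set.univ : Set X'))
    {G : Type*} [Group G] [Countable G] [Group.FG G]
    {G' : Type*} [Group G'] [Countable G']
    (Φ : G → X ≃ₜ X) (hΦ : IsCantorAction Φ)
    (Ψ : G' → X' ≃ₜ X') (hΨ : IsCantorAction Ψ)
    (h : X ≃ₜ X') (hcoe : IsContinuousOrbitEquivalence Φ Ψ h)
    (hstable : ∃ (y' : X') (V : ℕ → Set X'), IsAdaptedBasis Ψ y' V ∧ IsStableChain Ψ V) :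
    ∀ (x : X) (U : ℕ → Set X), IsAdaptedBasis Φ x U → IsStableChain Φ U :=
  stmt13_general Φ hΦ Ψ hΨ h hcoe hstable
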